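/- Let 0 < s < 1, n ≥ 1, and let φ : ℝⁿ → [0,1] and η : ℝ → ℝ be bounded functions with φ ≥ 0 and η nondecreasing. Define v(x,t) = φ(x) η(t). Suppose that for fixed (x,t) the double integrals defining (∂_t − Δ)^s v(x,t), the quantity η(t)·(−Δ)^s φ(x) (computed through the heat-kernel representation ∫_{−∞}^t ∫ (φ(x)−φ(y)) η(t) K dy dτ), and (sup φ)·∂_t^s η(t) all converge absolutely, and suppose η(t) ≥ 0. Then (∂_t − Δ)^s v(x,t) ≤ η(t) (−Δ)^s φ(x) + (sup_{ℝⁿ} φ) ∂_t^s η(t). -/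
import Mathlib


open MeasureTheory

theorem stmt19 {n : ℕ} (hn : 1 ≤ n) (s : ℝ) (hs : 0 < s) (hs1 : s < 1)
    (Cns : ℝ) (hC : 0 < Cns)
    (φ : EuclideanSpace ℝ (Fin n) → ℝ) (hφ0 : ∀ x, 0 ≤ φ x) (hφ1 : ∀ x, φ x ≤ 1)
    (η : ℝ → ℝ) (hη : Monotone η) (hηb : ∃ B, ∀ t, |η t| ≤ B)
    (x : EuclideanSpace ℝ (Fin n)) (t : ℝ) (hηt : 0 ≤ η t)
    -- absolute convergence of the integral defining (∂ₜ − Δ)ˢ v at (x,t)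
    (h1 : IntegrableOn
      (fun q : EuclideanSpace ℝ (Fin n) × ℝ =>
        (φ x * η t - φ q.1 * η q.2) * ((t - q.2) ^ (-((n : ℝ) / 2 + 1 + s)) *
          Real.exp (-‖x - q.1‖ ^ 2 / (4 * (t - q.2)))))
      {q | q.2 < t})
    -- absolute convergence of the heat-kernel representation of η(t)·(−Δ)ˢφ(x)
    (h2 : IntegrableOn
      (fun q : EuclideanSpace ℝ (Fin n) × ℝ =>
        (φ x - φ q.1) * η t * ((t - q.2) ^ (-((n : ℝ) / 2 + 1 + s)) *
          Real.exp (-‖x - q.1‖ ^ 2 / (4 * (t - q.2)))))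
      {q | q.2 < t})
    -- absolute convergence of the heat-kernel representation of (sup φ)·∂ₜˢη(t)
    (h3 : IntegrableOn
      (fun q : EuclideanSpace ℝ (Fin n) × ℝ =>
        (η t - η q.2) * sSup (Set.range φ) * ((t - q.2) ^ (-((n : ℝ) / 2 + 1 + s)) *
          Real.exp (-‖x - q.1‖ ^ 2 / (4 * (t - q.2)))))
      {q | q.2 < t}) :
    Cns * (∫ q in {q : EuclideanSpace ℝ (Fin n) × ℝ | q.2 < t},
        (φ x * η t - φ q.1 * η q.2) * ((t - q.2) ^ (-((n : ℝ) / 2 + 1 + s)) *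
          Real.exp (-‖x - q.1‖ ^ 2 / (4 * (t - q.2)))))
      ≤ Cns * (∫ q in {q : EuclideanSpace ℝ (Fin n) × ℝ | q.2 < t},
          (φ x - φ q.1) * η t * ((t - q.2) ^ (-((n : ℝ) / 2 + 1 + s)) *
            Real.exp (-‖x - q.1‖ ^ 2 / (4 * (t - q.2)))))
        + Cns * (∫ q in {q : EuclideanSpace ℝ (Fin n) × ℝ | q.2 < t},
            (η t - η q.2) * sSup (Set.range φ) * ((t - q.2) ^ (-((n : ℝ) / 2 + 1 + s)) *
              Real.exp (-‖x - q.1‖ ^ 2 / (4 * (t - q.2))))) := by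
  rw [← mul_add, ← integral_add h2 h3]
  apply mul_le_mul_of_nonneg_left _ hC.le
  apply setIntegral_mono_on h1 (h2.add h3)
    (by
      have : MeasurableSet {q : EuclideanSpace ℝ (Fin n) × ℝ | q.2 < t} :=
        measurableSet_lt (by fun_prop) measurable_const
      exact this)
  intro q hq
  have ht : (0:ℝ) < t - q.2 := sub_pos.2 hq
  have hker : 0 ≤ (t - q.2) ^ (-((n : ℝ) / 2 + 1 + s)) *
      Real.exp (-‖x - q.1‖ ^ 2 / (4 * (t - q.2))) :=
    mul_nonneg (Real.rpow_nonneg ht.le _) (Real.exp_nonneg _)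
  have hbdd : BddAbove (Set.range φ) := ⟨1, by rintro _ ⟨y, rfl⟩; exact hφ1 y⟩
  have hsup : φ q.1 ≤ sSup (Set.range φ) := le_csSup hbdd ⟨q.1, rfl⟩
  have hηq : η q.2 ≤ η t := hη hq.le
  have key : φ x * η t - φ q.1 * η q.2 ≤
      (φ x - φ q.1) * η t + (η t - η q.2) * sSup (Set.range φ) := by
    have : (η t - η q.2) * φ q.1 ≤ (η t - η q.2) * sSup (Set.range φ) :=
      mul_le_mul_of_nonneg_left hsup (sub_nonneg.2 hηq)
    nlinarith
  calc (φ x * η t - φ q.1 * η q.2) * _ ≤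
      ((φ x - φ q.1) * η t + (η t - η q.2) * sSup (Set.range φ)) *
        ((t - q.2) ^ (-((n : ℝ) / 2 + 1 + s)) *
          Real.exp (-‖x - q.1‖ ^ 2 / (4 * (t - q.2)))) :=
        mul_le_mul_of_nonneg_right key hker
    _ = _ := by simp only [Pi.add_apply]; ring
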